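/- Let G be a weighted undirected graph partitioned into subgraphs with boundary sets B_i. Call b ∈ B_i a half-connected boundary vertex if it has a neighbor in G_i that is not a boundary vertex, and full-connected otherwise (all its neighbors in G_i are boundary vertices). Let G̃' be the pruned overlay graph containing: for each partition i, edges among all pairs of half-connected boundary vertices of B_i (with weight equal to the inserted boundary-pair distance used in the boundary strategy), all inter-partition edges of G, and all original adjacent edges of each full-connected boundary vertex within its partition. Then for all boundary vertices b_s, b_t ∈ B, d_G(b_s, b_t) = d_{G̃'}(b_s, b_t). -/

import Mathlib

open scoped ENNReal Classical

namespace PSP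

/-- A weighted undirected graph: symmetric adjacency and a weight function
with values in `ℝ≥0∞` (so weights are non-negative). -/
structure WGraph (V : Type*) where
  Adj : V → V → Prop
  symm : ∀ {u v}, Adj u v → Adj v u
  w : V → V → ℝ≥0∞

variable {V : Type*} {ι : Type*}

/-- Sum of `f` over consecutive pairs of a list. -/
noncomputable def pairSum (f : V → V → ℝ≥0∞) : List V → ℝ≥0∞
  | a :: b :: rest => f a b + pairSum f (b :: rest)
  | _ => 0

/-- Weighted length of a walk (given as a list of vertices). -/
noncomputable def wlen (G : WGraph V) (l : List V) : ℝ≥0∞ := pairSum G.w l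

/-- `l` is a walk in `G` from `s` to `t`: consecutive vertices are adjacent,
the first vertex is `s` and the last is `t`. -/
def IsWalk (G : WGraph V) (s t : V) (l : List V) : Prop :=
  l.Chain' G.Adj ∧ l.head? = some s ∧ l.getLast? = some t

/-- Shortest-path distance in `G` (`⊤` if no walk exists). -/
noncomputable def dist (G : WGraph V) (s t : V) : ℝ≥0∞ :=
  sInf {x | ∃ l, IsWalk G s t l ∧ wlen G l = x}

/-- Induced subgraph on a vertex set `S`. -/
def induce (G : WGraph V) (S : Set V) : WGraph V where
  Adj u v := G.Adj u v ∧ u ∈ S ∧ v ∈ S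
  symm h := ⟨G.symm h.1, h.2.2, h.2.1⟩
  w := G.w

/-- A partition of the vertex set is given by a function `P : V → ι`
assigning each vertex its partition index. The set of all boundary
vertices: vertices having a neighbor in another partition. -/
def bdry (G : WGraph V) (P : V → ι) : Set V :=
  {v | ∃ u, G.Adj v u ∧ P u ≠ P v}

/-- Boundary vertices of partition `i`. -/
def bdryIn (G : WGraph V) (P : V → ι) (i : ι) : Set V :=
  {v | P v = i ∧ ∃ u, G.Adj v u ∧ P u ≠ i}

/-- The induced subgraph `G_i` of partition `i`. -/
def partGraph (G : WGraph V) (P : V → ι) (i : ι) : WGraph V :=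
  induce G {x | P x = i}

/-- The No-Boundary overlay graph `G̃`: vertices are boundary vertices; for each
partition, each boundary pair gets an edge of weight equal to the *local*
partition distance; inter-partition edges of `G` keep their original weight. -/
noncomputable def overlay (G : WGraph V) (P : V → ι) : WGraph V where
  Adj u v := (P u = P v ∧ u ∈ bdry G P ∧ v ∈ bdry G P) ∨ (P u ≠ P v ∧ G.Adj u v)
  symm := by
    rintro u v (⟨h1, h2, h3⟩ | ⟨h1, h2⟩)
    · exact Or.inl ⟨h1.symm, h3, h2⟩
    · exact Or.inr ⟨fun h => h1 h.symm, G.symm h2⟩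
  w u v := if P u = P v then dist (partGraph G P (P u)) u v else G.w u v

/-- A half-connected boundary vertex: has a non-boundary neighbor in its own partition. -/
def halfC (G : WGraph V) (P : V → ι) (b : V) : Prop :=
  b ∈ bdry G P ∧ ∃ u, G.Adj b u ∧ P u = P b ∧ u ∉ bdry G P

/-- A full-connected boundary vertex: all in-partition neighbors are boundary vertices. -/
def fullC (G : WGraph V) (P : V → ι) (b : V) : Prop :=
  b ∈ bdry G P ∧ ∀ u, G.Adj b u → P u = P b → u ∈ bdry G P

/-- The pruned overlay graph `G̃'`, with inserted boundary-pair weights `ω`: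
edges among half-connected boundary pairs of the same partition (weight `ω`),
all inter-partition edges, and the original in-partition adjacent edges of
full-connected boundary vertices. -/
noncomputable def pruned (G : WGraph V) (P : V → ι) (ω : V → V → ℝ≥0∞) : WGraph V where
  Adj u v :=
    (P u = P v ∧ halfC G P u ∧ halfC G P v) ∨
    (P u ≠ P v ∧ G.Adj u v) ∨
    (P u = P v ∧ G.Adj u v ∧ u ∈ bdry G P ∧ v ∈ bdry G P ∧ (fullC G P u ∨ fullC G P v))
  symm := by
    rintro u v (⟨h1, h2, h3⟩ | ⟨h1, h2⟩ | ⟨h1, h2, h3, h4, h5⟩)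
    · exact Or.inl ⟨h1.symm, h3, h2⟩
    · exact Or.inr (Or.inl ⟨fun h => h1 h.symm, G.symm h2⟩)
    · exact Or.inr (Or.inr ⟨h1.symm, G.symm h2, h4, h3, h5.symm⟩)
  w u v := if P u = P v ∧ halfC G P u ∧ halfC G P v then ω u v else G.w u v

/-- The augmented partition graph `G'_i`: the induced subgraph `G_i` plus, for each
boundary pair `b₁ b₂ ∈ B_i`, an inserted edge of weight `ω b₁ b₂` (taking the
minimum with an already-existing edge weight). -/
noncomputable def augment (G : WGraph V) (P : V → ι) (i : ι) (ω : V → V → ℝ≥0∞) : WGraph V where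
  Adj u v := (G.Adj u v ∧ P u = i ∧ P v = i) ∨ (u ∈ bdryIn G P i ∧ v ∈ bdryIn G P i)
  symm := by
    rintro u v (⟨h1, h2, h3⟩ | ⟨h1, h2⟩)
    · exact Or.inl ⟨G.symm h1, h3, h2⟩
    · exact Or.inr ⟨h2, h1⟩
  w u v :=
    if u ∈ bdryIn G P i ∧ v ∈ bdryIn G P i then
      (if G.Adj u v ∧ P u = i ∧ P v = i then min (ω u v) (G.w u v) else ω u v)
    else G.w u v

/-- Graph obtained from `G` by adding, for every pair `u v ∈ S`, a shortcut edge
of weight `dist G u v` (taking the minimum with an already-existing edge weight). -/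
noncomputable def shortcut (G : WGraph V) (S : Set V) : WGraph V where
  Adj u v := G.Adj u v ∨ (u ∈ S ∧ v ∈ S)
  symm := by
    rintro u v (h | ⟨h1, h2⟩)
    · exact Or.inl (G.symm h)
    · exact Or.inr ⟨h2, h1⟩
  w u v :=
    if u ∈ S ∧ v ∈ S then
      (if G.Adj u v then min (dist G u v) (G.w u v) else dist G u v)
    else G.w u v

/-- Vertex-splitting construction: each cut vertex `x ∈ X` keeps its neighbors in
group `N x 0`; for `1 ≤ i ≤ l x` a duplicate `(x, i)` is created, connected to the
vertices of `N x i` with the original weights and to `x` by a zero-weight edge. -/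
noncomputable def split (G : WGraph V) (X : Set V) (N : V → ℕ → Set V) (l : V → ℕ) :
    WGraph (V ⊕ V × ℕ) where
  Adj a b := match a, b with
    | .inl u, .inl v => G.Adj u v ∧ (u ∈ X → v ∈ N u 0) ∧ (v ∈ X → u ∈ N v 0)
    | .inl v, .inr (x, i) => x ∈ X ∧ 1 ≤ i ∧ i ≤ l x ∧ ((G.Adj x v ∧ v ∈ N x i) ∨ v = x)
    | .inr (x, i), .inl v => x ∈ X ∧ 1 ≤ i ∧ i ≤ l x ∧ ((G.Adj x v ∧ v ∈ N x i) ∨ v = x)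
    | .inr _, .inr _ => False
  symm := by
    rintro (u | ⟨x, i⟩) (v | ⟨y, j⟩) h
    · exact ⟨G.symm h.1, h.2.2, h.2.1⟩
    · exact h
    · exact h
    · exact h.elim
  w a b := match a, b with
    | .inl u, .inl v => G.w u v
    | .inl v, .inr (x, _) => if v = x then 0 else G.w x v
    | .inr (x, _), .inl v => if v = x then 0 else G.w x v
    | .inr _, .inr _ => 0

/-!
Every edge of `G̃'` is at least as long as the `G`-distance between its ends (`ω ≥ d_G` on
half-connected pairs, all other edges are edges of `G`), so `d_G ≤ d_G̃'`.

Conversely, fix the target `t` and extend `v ↦ d_G̃'(v, t)` from boundary vertices to an interior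
vertex `v` of `G_i` by `min_s (d_{G_i}(v, s) + d_G̃'(s, t))` over the half-connected `s ∈ B_i`.
This potential vanishes at `t` and drops by at most `w(a, b)` across every edge `ab` of `G`: an
edge between boundary vertices is either kept in `G̃'` or joins two half-connected vertices whose
`G̃'`-edge has weight `ω ≤ d_{G_i}`, and a boundary neighbour of an interior vertex is
half-connected. Summing along a walk bounds the potential of `s` by `d_G(s, t)`.
-/

section Walks

variable {G : WGraph V} {s t a b : V}

lemma isWalk_iff {l : List V} :
    IsWalk G s t l ↔ l.IsChain G.Adj ∧ l.head? = some s ∧ l.getLast? = some t := Iff.rfl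

lemma isWalk_singleton_iff : IsWalk G s t [a] ↔ a = s ∧ a = t := by
  simp [isWalk_iff]

lemma isWalk_cons_cons_iff {r : List V} :
    IsWalk G s t (a :: b :: r) ↔ a = s ∧ G.Adj a b ∧ IsWalk G b t (b :: r) := by
  simp only [isWalk_iff, List.isChain_cons_cons, List.head?_cons, Option.some.injEq,
    List.getLast?_cons_cons, true_and]
  tauto

lemma wlen_cons_cons (r : List V) : wlen G (a :: b :: r) = G.w a b + wlen G (b :: r) := rfl

lemma dist_le_wlen {l : List V} (h : IsWalk G s t l) : dist G s t ≤ wlen G l :=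
  sInf_le ⟨l, h, rfl⟩

@[simp]
lemma dist_self : dist G s s = 0 :=
  nonpos_iff_eq_zero.mp (dist_le_wlen (isWalk_singleton_iff.mpr ⟨rfl, rfl⟩))

lemma dist_le_add_dist_of_adj (h : G.Adj a b) : dist G a t ≤ G.w a b + dist G b t := by
  conv_rhs => rw [dist, sInf_eq_iInf, ENNReal.add_iInf]
  refine le_iInf fun _ => ?_
  rw [ENNReal.add_iInf]
  refine le_iInf fun ⟨l, hl, hlen⟩ => ?_
  obtain ⟨r, rfl⟩ := List.head?_eq_some_iff.mp (isWalk_iff.mp hl).2.1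
  rw [← hlen, ← wlen_cons_cons]
  exact dist_le_wlen (isWalk_cons_cons_iff.mpr ⟨rfl, h, hl⟩)

lemma dist_le_w_of_adj (h : G.Adj a b) : dist G a b ≤ G.w a b := by
  simpa using dist_le_add_dist_of_adj (t := b) h

lemma le_dist_add_of_forall_adj {φ : V → ℝ≥0∞}
    (hφ : ∀ a b, G.Adj a b → φ a ≤ G.w a b + φ b) (s t : V) : φ s ≤ dist G s t + φ t := by
  rw [dist, ENNReal.sInf_add]
  refine le_iInf₂ ?_
  rintro _ ⟨l, hl, rfl⟩
  induction l generalizing s with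
  | nil => simp [IsWalk] at hl
  | cons a l ih =>
    cases l with
    | nil =>
      obtain ⟨rfl, rfl⟩ := isWalk_singleton_iff.mp hl
      simp [wlen, pairSum]
    | cons b r =>
      obtain ⟨rfl, hab, hl⟩ := isWalk_cons_cons_iff.mp hl
      calc φ a ≤ G.w a b + φ b := hφ a b hab
        _ ≤ G.w a b + (wlen G (b :: r) + φ t) := by gcongr; exact ih b hl
        _ = wlen G (a :: b :: r) + φ t := by rw [wlen_cons_cons, add_assoc]

lemma dist_triangle (s u t : V) : dist G s t ≤ dist G s u + dist G u t :=
  le_dist_add_of_forall_adj (fun _ _ h => dist_le_add_dist_of_adj h) s u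

lemma dist_le_dist_of_forall_adj {H : WGraph V} (h : ∀ u v, H.Adj u v → dist G u v ≤ H.w u v)
    (s t : V) : dist G s t ≤ dist H s t := by
  simpa using le_dist_add_of_forall_adj (G := H) (φ := fun v => dist G v t)
    (fun u v huv => (dist_triangle u v t).trans (by gcongr; exact h u v huv)) s t

end Walks

section Pruned

variable {G : WGraph V} {P : V → ι} {ω : V → V → ℝ≥0∞} {a b s t : V}

lemma part_eq_of_adj_of_notMem_bdry (hab : G.Adj a b) (ha : a ∉ bdry G P) : P b = P a :=
  not_not.mp fun hne => ha ⟨b, hab, hne⟩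

lemma halfC_or_fullC (ha : a ∈ bdry G P) : halfC G P a ∨ fullC G P a :=
  or_iff_not_imp_left.mpr fun h =>
    ⟨ha, fun u hau hu => by_contra fun hub => h ⟨ha, u, hau, hu, hub⟩⟩

lemma pruned_w_of_halfC (h : P a = P b ∧ halfC G P a ∧ halfC G P b) :
    (pruned G P ω).w a b = ω a b := if_pos h

lemma pruned_w_of_not_halfC (h : ¬(P a = P b ∧ halfC G P a ∧ halfC G P b)) :
    (pruned G P ω).w a b = G.w a b := if_neg h

lemma dist_pruned_le_of_halfC
    (hω : ∀ b1 b2, P b1 = P b2 → halfC G P b1 → halfC G P b2 →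
      ω b1 b2 ≤ dist (partGraph G P (P b1)) b1 b2)
    (ha : halfC G P a) (hb : halfC G P b) (hab : P a = P b) :
    dist (pruned G P ω) a b ≤ dist (partGraph G P (P a)) a b := by
  have hedge : P a = P b ∧ halfC G P a ∧ halfC G P b := ⟨hab, ha, hb⟩
  calc dist (pruned G P ω) a b ≤ (pruned G P ω).w a b := dist_le_w_of_adj (.inl hedge)
    _ = ω a b := pruned_w_of_halfC hedge
    _ ≤ _ := hω a b hab ha hb

lemma dist_pruned_le_of_adj
    (hω : ∀ b1 b2, P b1 = P b2 → halfC G P b1 → halfC G P b2 →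
      ω b1 b2 ≤ dist (partGraph G P (P b1)) b1 b2)
    (hab : G.Adj a b) (ha : a ∈ bdry G P) (hb : b ∈ bdry G P) :
    dist (pruned G P ω) a b ≤ G.w a b := by
  by_cases hP : P a = P b
  · by_cases hhalf : halfC G P a ∧ halfC G P b
    · exact (dist_pruned_le_of_halfC hω hhalf.1 hhalf.2 hP).trans
        (dist_le_w_of_adj (G := partGraph G P (P a)) ⟨hab, rfl, hP.symm⟩)
    · have hfull : fullC G P a ∨ fullC G P b := by
        rcases halfC_or_fullC ha with ha' | ha' <;> rcases halfC_or_fullC hb with hb' | hb'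
        exacts [absurd ⟨ha', hb'⟩ hhalf, .inr hb', .inl ha', .inl ha']
      rw [← pruned_w_of_not_halfC (ω := ω) fun h => hhalf h.2]
      exact dist_le_w_of_adj (.inr (.inr ⟨hP, hab, ha, hb, hfull⟩))
  · rw [← pruned_w_of_not_halfC (ω := ω) fun h => hP h.1]
    exact dist_le_w_of_adj (.inr (.inl ⟨hP, hab⟩))

lemma dist_le_dist_pruned
    (hω : ∀ b1 b2, P b1 = P b2 → halfC G P b1 → halfC G P b2 → dist G b1 b2 ≤ ω b1 b2)
    (s t : V) : dist G s t ≤ dist (pruned G P ω) s t := by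
  refine dist_le_dist_of_forall_adj (fun u v huv => ?_) s t
  by_cases hhalf : P u = P v ∧ halfC G P u ∧ halfC G P v
  · rw [pruned_w_of_halfC hhalf]
    exact hω u v hhalf.1 hhalf.2.1 hhalf.2.2
  · rw [pruned_w_of_not_halfC hhalf]
    rcases huv with h | ⟨_, h⟩ | ⟨_, h, _⟩
    exacts [absurd h hhalf, dist_le_w_of_adj h, dist_le_w_of_adj h]

noncomputable def prunedPotential (G : WGraph V) (P : V → ι) (ω : V → V → ℝ≥0∞) (t v : V) :
    ℝ≥0∞ :=
  if v ∈ bdry G P then dist (pruned G P ω) v t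
  else ⨅ (s) (_ : halfC G P s ∧ P s = P v),
    dist (partGraph G P (P v)) v s + dist (pruned G P ω) s t

lemma prunedPotential_of_mem_bdry (ha : a ∈ bdry G P) :
    prunedPotential G P ω t a = dist (pruned G P ω) a t := if_pos ha

lemma prunedPotential_of_notMem_bdry (ha : a ∉ bdry G P) :
    prunedPotential G P ω t a = ⨅ (s) (_ : halfC G P s ∧ P s = P a),
      dist (partGraph G P (P a)) a s + dist (pruned G P ω) s t := if_neg ha

lemma prunedPotential_le_of_halfC
    (hω : ∀ b1 b2, P b1 = P b2 → halfC G P b1 → halfC G P b2 →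
      ω b1 b2 ≤ dist (partGraph G P (P b1)) b1 b2)
    (ha : a ∈ bdry G P → halfC G P a) (hs : halfC G P s) (hsa : P s = P a) :
    prunedPotential G P ω t a ≤ dist (partGraph G P (P a)) a s + dist (pruned G P ω) s t := by
  by_cases hab : a ∈ bdry G P
  · rw [prunedPotential_of_mem_bdry hab]
    exact (dist_triangle a s t).trans
      (add_le_add (dist_pruned_le_of_halfC hω (ha hab) hs hsa.symm) le_rfl)
  · rw [prunedPotential_of_notMem_bdry hab]
    exact iInf₂_le s ⟨hs, hsa⟩

lemma prunedPotential_le_add_of_adj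
    (hω : ∀ b1 b2, P b1 = P b2 → halfC G P b1 → halfC G P b2 →
      ω b1 b2 ≤ dist (partGraph G P (P b1)) b1 b2)
    (hab : G.Adj a b) :
    prunedPotential G P ω t a ≤ G.w a b + prunedPotential G P ω t b := by
  by_cases hb : b ∈ bdry G P
  · by_cases ha : a ∈ bdry G P
    · rw [prunedPotential_of_mem_bdry ha, prunedPotential_of_mem_bdry hb]
      exact (dist_triangle a b t).trans (add_le_add (dist_pruned_le_of_adj hω hab ha hb) le_rfl)
    · have hP := part_eq_of_adj_of_notMem_bdry hab ha
      have hhalf : halfC G P b := ⟨hb, a, G.symm hab, hP.symm, ha⟩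
      rw [prunedPotential_of_mem_bdry hb]
      exact (prunedPotential_le_of_halfC hω (absurd · ha) hhalf hP).trans
        (add_le_add (dist_le_w_of_adj (G := partGraph G P (P a)) ⟨hab, rfl, hP⟩) le_rfl)
  · have hP := part_eq_of_adj_of_notMem_bdry (G.symm hab) hb
    have ha : a ∈ bdry G P → halfC G P a := fun ha => ⟨ha, b, hab, hP.symm, hb⟩
    rw [prunedPotential_of_notMem_bdry hb, ← hP]
    simp only [ENNReal.add_iInf]
    refine le_iInf₂ fun s ⟨hs, hsa⟩ => ?_
    calc prunedPotential G P ω t a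
        ≤ dist (partGraph G P (P a)) a s + dist (pruned G P ω) s t :=
          prunedPotential_le_of_halfC hω ha hs hsa
      _ ≤ G.w a b + dist (partGraph G P (P a)) b s + dist (pruned G P ω) s t := by
          gcongr; exact dist_le_add_dist_of_adj (G := partGraph G P (P a)) ⟨hab, rfl, hP.symm⟩
      _ = _ := add_assoc _ _ _

lemma dist_pruned_le_dist
    (hω : ∀ b1 b2, P b1 = P b2 → halfC G P b1 → halfC G P b2 →
      ω b1 b2 ≤ dist (partGraph G P (P b1)) b1 b2)
    (hs : s ∈ bdry G P) (ht : t ∈ bdry G P) :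
    dist (pruned G P ω) s t ≤ dist G s t := by
  simpa [prunedPotential_of_mem_bdry, hs, ht] using
    le_dist_add_of_forall_adj (fun a b hab => prunedPotential_le_add_of_adj (t := t) hω hab) s t

end Pruned

/-- Lemma 4, pruning-based overlay optimization: the pruned overlay
preserves all boundary-to-boundary distances.  The inserted weight `ω` is the
boundary-pair distance used by the boundary strategy, which lies between the global
distance and the local partition distance. -/
theorem stmt6 {V ι : Type*} (G : WGraph V) (P : V → ι) (ω : V → V → ℝ≥0∞)
    (hω : ∀ b1 b2 : V, P b1 = P b2 → b1 ∈ bdry G P → b2 ∈ bdry G P →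
      dist G b1 b2 ≤ ω b1 b2 ∧ ω b1 b2 ≤ dist (partGraph G P (P b1)) b1 b2)
    (bs bt : V) (h1 : bs ∈ bdry G P) (h2 : bt ∈ bdry G P) :
    dist G bs bt = dist (pruned G P ω) bs bt :=
  le_antisymm (dist_le_dist_pruned (fun b1 b2 hP h1 h2 => (hω b1 b2 hP h1.1 h2.1).1) bs bt)
    (dist_pruned_le_dist (fun b1 b2 hP h1 h2 => (hω b1 b2 hP h1.1 h2.1).2) h1 h2)

end PSP
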